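/- arXiv:math/9709206 — 11 statements merged into one kernel-verified Lean document; each statement's English description precedes it below -/
import Mathlib

section
/- Let R be a ring and let p, q ∈ R be idempotents. Set m = p − q, u = (1 − q)(1 − p) + qp and v = (1 − p)(1 − q) + pq. Then m(1 − m²) = −[u, pv], where [a, b] = ab − ba denotes the commutator. -/
/-- For idempotents `p, q` in a ring, with `m = p - q`, `u = (1 - q)(1 - p) + qp` and
`v = (1 - p)(1 - q) + pq`, one has `m(1 - m²) = -[u, pv]`. -/
theorem m_mul_one_sub_m_sq_eq_neg_commutator {R : Type*} [Ring R] (p q : R)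
    (hp : p ^ 2 = p) (hq : q ^ 2 = q) :
    (p - q) * (1 - (p - q) ^ 2) =
      -(((1 - q) * (1 - p) + q * p) * (p * ((1 - p) * (1 - q) + p * q)) -
        p * ((1 - p) * (1 - q) + p * q) * ((1 - q) * (1 - p) + q * p)) := by
  have hp' : p * p = p := by rw [← sq]; exact hp
  have hq' : q * q = q := by rw [← sq]; exact hq
  have hpp : ∀ x : R, p * (p * x) = p * x := fun x => by rw [← mul_assoc, hp']
  have hqq : ∀ x : R, q * (q * x) = q * x := fun x => by rw [← mul_assoc, hq']
  noncomm_ring [hp', hq', hpp, hqq]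
end

section
/- Let R be a ring and let p, q ∈ R be idempotents. Set m = p − q and v = (1 − p)(1 − q) + pq. If t ∈ R commutes with both p and q, then [(1 − 2q)tm, pv] = tm(1 − m²), where [a, b] = ab − ba denotes the commutator. -/
lemma core_idem {R : Type*} [Ring R] (p q : R) (hp : p * p = p) (hq : q * q = q) :
    ((1 - 2 * q) * (p - q)) * (p * ((1 - p) * (1 - q) + p * q)) -
      (p * ((1 - p) * (1 - q) + p * q)) * ((1 - 2 * q) * (p - q)) =
      (p - q) * (1 - (p - q) ^ 2) := by
  have hpq : ∀ x : R, p * (p * x) = p * x := fun x => by rw [← mul_assoc, hp]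
  have hqq : ∀ x : R, q * (q * x) = q * x := fun x => by rw [← mul_assoc, hq]
  noncomm_ring
  simp only [mul_assoc, hp, hq, hpq, hqq]
  abel

/-- Part (2) of the Lemma: for idempotents `p, q` in a ring, with `m = p - q` and
`v = (1 - p)(1 - q) + pq`, if `t` commutes with `p` and `q` then
`[(1 - 2q)tm, pv] = tm(1 - m²)`. -/
theorem commutator_eq_tm_one_sub_m_sq {R : Type*} [Ring R] (p q t : R)
    (hp : p ^ 2 = p) (hq : q ^ 2 = q) (htp : t * p = p * t) (htq : t * q = q * t) :
    ((1 - 2 * q) * t * (p - q)) * (p * ((1 - p) * (1 - q) + p * q)) -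
      (p * ((1 - p) * (1 - q) + p * q)) * ((1 - 2 * q) * t * (p - q)) =
      t * (p - q) * (1 - (p - q) ^ 2) := by
  have hp' : p * p = p := by rwa [sq] at hp
  have hq' : q * q = q := by rwa [sq] at hq
  have cp : Commute t p := htp
  have cq : Commute t q := htq
  have cA : Commute t (1 - 2 * q) :=
    (Commute.one_right t).sub_right (by rw [two_mul]; exact cq.add_right cq)
  have cX : Commute t (p * ((1 - p) * (1 - q) + p * q)) :=
    cp.mul_right ((((Commute.one_right t).sub_right cp).mul_right
      ((Commute.one_right t).sub_right cq)).add_right (cp.mul_right cq))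
  set X := p * ((1 - p) * (1 - q) + p * q) with hX
  have e1 : (1 - 2 * q) * t * (p - q) * X = t * ((1 - 2 * q) * (p - q) * X) := by
    rw [← cA.eq, mul_assoc, mul_assoc, mul_assoc]
  have e2 : X * ((1 - 2 * q) * t * (p - q)) = t * (X * ((1 - 2 * q) * (p - q))) := by
    rw [← cA.eq, ← mul_assoc, ← mul_assoc, ← cX.eq, mul_assoc, mul_assoc]
  rw [e1, e2, ← mul_sub, core_idem p q hp' hq', mul_assoc]
end

section
/- Let R be a ring and let p, q ∈ R be idempotents. Set m = p − q and v = (1 − p)(1 − q) + pq. Suppose 1 − m² is invertible in R (a unit) and t ∈ R commutes with both p and q. Then [(1 − 2q)tm(1 − m²)⁻¹, pv] = tm, where [a, b] = ab − ba denotes the commutator. -/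
/-- Part (3) of the Lemma: for idempotents `p, q` in a ring, with `m = p - q` and
`v = (1 - p)(1 - q) + pq`, if `1 - m²` is a unit and `t` commutes with `p` and `q` then
`[(1 - 2q) t m (1 - m²)⁻¹, pv] = tm`. -/
theorem commutator_eq_tm_of_isUnit {R : Type*} [Ring R] (p q t : R)
    (hp : p ^ 2 = p) (hq : q ^ 2 = q) (htp : t * p = p * t) (htq : t * q = q * t)
    (hu : IsUnit (1 - (p - q) ^ 2)) :
    ((1 - 2 * q) * t * (p - q) * ↑hu.unit⁻¹) * (p * ((1 - p) * (1 - q) + p * q)) -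
      (p * ((1 - p) * (1 - q) + p * q)) * ((1 - 2 * q) * t * (p - q) * ↑hu.unit⁻¹) =
      t * (p - q) := by
  have hp' : p * p = p := by rw [← sq]; exact hp
  have hq' : q * q = q := by rw [← sq]; exact hq
  have hp2 : ∀ x : R, p * (p * x) = p * x := fun x => by rw [← mul_assoc, hp']
  have hq2 : ∀ x : R, q * (q * x) = q * x := fun x => by rw [← mul_assoc, hq']
  have h2 : ∀ a x : R, a * (2 * x) = 2 * (a * x) := fun a x => by
    rw [two_mul, two_mul, mul_add]
  have htp2 : ∀ x : R, t * (p * x) = p * (t * x) := fun x => by rw [← mul_assoc, htp, mul_assoc]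
  have htq2 : ∀ x : R, t * (q * x) = q * (t * x) := fun x => by rw [← mul_assoc, htq, mul_assoc]
  set w : R := ↑hu.unit⁻¹ with hwdef
  have hw1 : (1 - (p - q) ^ 2) * w = 1 := hu.mul_val_inv
  -- p, q, t commute with 1 - m^2
  have hpm : Commute p ((hu.unit : Rˣ) : R) := by
    rw [IsUnit.unit_spec]
    show p * _ = _ * p
    simp only [sq, mul_sub, sub_mul, mul_one, one_mul, mul_assoc, hp2, hq2, hp', hq']
    abel
  have hqm : Commute q ((hu.unit : Rˣ) : R) := by
    rw [IsUnit.unit_spec]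
    show q * _ = _ * q
    simp only [sq, mul_sub, sub_mul, mul_one, one_mul, mul_assoc, hp2, hq2, hp', hq']
    abel
  have htm : Commute t ((hu.unit : Rˣ) : R) := by
    rw [IsUnit.unit_spec]
    show t * _ = _ * t
    simp only [sq, mul_sub, sub_mul, mul_one, one_mul, mul_assoc, htp2, htq2, htp, htq]
  have hwp0 : w * p = p * w := (hpm.units_inv_right).symm.eq
  have hwq0 : w * q = q * w := (hqm.units_inv_right).symm.eq
  have hwt0 : w * t = t * w := (htm.units_inv_right).symm.eq
  have hwp : ∀ x : R, w * (p * x) = p * (w * x) := fun x => by rw [← mul_assoc, hwp0, mul_assoc]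
  have hwq : ∀ x : R, w * (q * x) = q * (w * x) := fun x => by rw [← mul_assoc, hwq0, mul_assoc]
  have hwt : ∀ x : R, w * (t * x) = t * (w * x) := fun x => by rw [← mul_assoc, hwt0, mul_assoc]
  have key : (1 - 2 * q) * (p - q) * (p * q) - p * q * ((1 - 2 * q) * (p - q)) =
      (p - q) * (1 - (p - q) ^ 2) := by
    simp only [sq, sub_mul, mul_sub, mul_one, one_mul, mul_assoc, h2, hp2, hq2, hp', hq']
    noncomm_ring
  have step : ((1 - 2 * q) * t * (p - q) * w) * (p * q) - (p * q) * ((1 - 2 * q) * t * (p - q) * w) =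
      t * (((1 - 2 * q) * (p - q) * (p * q) - p * q * ((1 - 2 * q) * (p - q))) * w) := by
    simp only [sub_mul, mul_sub, mul_one, one_mul, mul_assoc, h2, hwp, hwq, hwt, hwp0, hwq0, hwt0,
      htp2, htq2, htp, htq]
  have hpv : p * ((1 - p) * (1 - q) + p * q) = p * q := by
    simp only [mul_add, mul_sub, mul_one, one_mul, sub_mul, mul_assoc, hp2, hq2, hp', hq']
    abel
  rw [hpv, step, key, mul_assoc (p - q), hw1, mul_one]
end

section
/- Let R be a ring, let p, q ∈ R be idempotents, and let n = 2k + 1 be an odd positive integer. Set m = p − q and v = (1 − p)(1 − q) + pq. Then m − mⁿ = [(1 − 2q)·(1 + m² + m⁴ + ⋯ + m^{2(k−1)})·m, pv], where [a, b] = ab − ba denotes the commutator; in particular m − mⁿ is a commutator of two elements of R. -/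
/-- For idempotents `p, q` in a ring and odd `n = 2k + 1`, with `m = p - q` and
`v = (1 - p)(1 - q) + pq`, the element `m - mⁿ` is the commutator
`[(1 - 2q)(1 + m² + ⋯ + m^{2(k-1)})m, pv]`. -/
theorem m_sub_m_pow_odd_eq_commutator {R : Type*} [Ring R] (p q : R)
    (hp : p ^ 2 = p) (hq : q ^ 2 = q) (n k : ℕ) (hn : n = 2 * k + 1) :
    (p - q) - (p - q) ^ n =
      ((1 - 2 * q) * (∑ i ∈ Finset.range k, (p - q) ^ (2 * i)) * (p - q)) *
          (p * ((1 - p) * (1 - q) + p * q)) -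
        (p * ((1 - p) * (1 - q) + p * q)) *
          ((1 - 2 * q) * (∑ i ∈ Finset.range k, (p - q) ^ (2 * i)) * (p - q)) := by
  have hp' : p * p = p := by rw [← sq]; exact hp
  have hq' : q * q = q := by rw [← sq]; exact hq
  have hpl : ∀ x : R, p * (p * x) = p * x := fun x => by rw [← mul_assoc, hp']
  have hql : ∀ x : R, q * (q * x) = q * x := fun x => by rw [← mul_assoc, hq']
  set m := p - q with hm
  set t : R := ∑ i ∈ Finset.range k, m ^ (2 * i) with ht
  have hm2 : m ^ 2 = p + q - p * q - q * p := by
    have : m ^ 2 = p * p + q * q - p * q - q * p := by rw [hm]; noncomm_ring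
    rw [this, hp', hq']
  have hpv : p * ((1 - p) * (1 - q) + p * q) = p * q := by
    simp only [mul_add, mul_sub, mul_one, sub_mul, one_mul, hpl, hp']
    abel
  have cp : Commute (m ^ 2) p := by
    unfold Commute SemiconjBy
    rw [hm2]
    simp only [add_mul, sub_mul, mul_add, mul_sub, mul_assoc, hp', hq', hpl, hql]
    abel
  have cq : Commute (m ^ 2) q := by
    unfold Commute SemiconjBy
    rw [hm2]
    simp only [add_mul, sub_mul, mul_add, mul_sub, mul_assoc, hp', hq', hpl, hql]
    abel
  have ctp : Commute t p :=
    Commute.sum_left _ _ _ (fun i _ => by rw [pow_mul]; exact cp.pow_left i)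
  have ctq : Commute t q :=
    Commute.sum_left _ _ _ (fun i _ => by rw [pow_mul]; exact cq.pow_left i)
  have ct2q : Commute t (2 * q) := by rw [two_mul]; exact ctq.add_right ctq
  have ctA : Commute t (1 - 2 * q) := (Commute.one_right t).sub_right ct2q
  have ctB : Commute t (p * q) := ctp.mul_right ctq
  -- base identity
  have key : (1 - 2 * q) * m * (p * q) - (p * q) * ((1 - 2 * q) * m) = m - m ^ 3 := by
    have hm3 : m ^ 3 = p - q - p * q * p + q * (p * q) := by
      rw [show m ^ 3 = m ^ 2 * m from pow_succ m 2, hm2, hm]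
      simp only [add_mul, sub_mul, mul_add, mul_sub, mul_assoc, hp', hq', hpl, hql]
      abel
    rw [hm3, hm]
    simp only [add_mul, sub_mul, mul_add, mul_sub, mul_assoc, mul_one, one_mul,
      hp', hq', hpl, hql, two_mul]
    abel
  rw [hpv]
  have e1 : (1 - 2 * q) * t * m * (p * q) = t * ((1 - 2 * q) * m * (p * q)) := by
    conv_lhs => rw [← ctA.eq]
    simp only [mul_assoc]
  have c2 : Commute ((p * q) * (1 - 2 * q)) t := (ctB.mul_right ctA).symm
  have e2 : (p * q) * ((1 - 2 * q) * t * m) = t * ((p * q) * ((1 - 2 * q) * m)) := by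
    calc (p * q) * ((1 - 2 * q) * t * m) = ((p * q) * (1 - 2 * q)) * t * m := by
          simp only [mul_assoc]
      _ = t * ((p * q) * (1 - 2 * q)) * m := by rw [c2.eq]
      _ = t * ((p * q) * ((1 - 2 * q) * m)) := by simp only [mul_assoc]
  have step1 : (1 - 2 * q) * t * m * (p * q) - (p * q) * ((1 - 2 * q) * t * m) =
      t * ((1 - 2 * q) * m * (p * q) - (p * q) * ((1 - 2 * q) * m)) := by
    rw [e1, e2]; exact (mul_sub t _ _).symm
  rw [step1, key, hn]
  -- telescoping
  rw [ht, Finset.sum_mul]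
  have : ∀ i, m ^ (2 * i) * (m - m ^ 3) = m ^ (2 * i + 1) - m ^ (2 * (i + 1) + 1) := by
    intro i
    rw [mul_sub, ← pow_succ, ← pow_add]
    congr 2
  simp_rw [this]
  rw [Finset.sum_range_sub' (fun i => m ^ (2 * i + 1))]
  simp
end

section
/- Let R be a ring, let p, q ∈ R be idempotents, and let n be an odd positive integer. Set m = p − q and v = (1 − p)(1 − q) + pq, and suppose 1 − m² is invertible in R. Then mⁿ = [(1 − 2q)·mⁿ·(1 − m²)⁻¹, pv], where [a, b] = ab − ba denotes the commutator; in particular mⁿ is a commutator of two elements of R. -/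
/-- For idempotents `p, q` in a ring and odd positive `n`, with `m = p - q` and
`v = (1 - p)(1 - q) + pq`, if `1 - m²` is a unit then
`mⁿ = [(1 - 2q) mⁿ (1 - m²)⁻¹, pv]`. -/
theorem m_pow_odd_eq_commutator_of_isUnit {R : Type*} [Ring R] (p q : R)
    (hp : p ^ 2 = p) (hq : q ^ 2 = q) (n : ℕ) (hodd : Odd n) (hpos : 0 < n)
    (hu : IsUnit (1 - (p - q) ^ 2)) :
    (p - q) ^ n =
      ((1 - 2 * q) * (p - q) ^ n * ↑hu.unit⁻¹) * (p * ((1 - p) * (1 - q) + p * q)) -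
        (p * ((1 - p) * (1 - q) + p * q)) * ((1 - 2 * q) * (p - q) ^ n * ↑hu.unit⁻¹) := by
  obtain ⟨k, hk⟩ := hodd
  have hpp : p * p = p := by rw [← pow_two, hp]
  have hqq : q * q = q := by rw [← pow_two, hq]
  have hpp' : ∀ x : R, x * p * p = x * p := fun x => by rw [mul_assoc, hpp]
  have hqq' : ∀ x : R, x * q * q = x * q := fun x => by rw [mul_assoc, hqq]
  set m := p - q with hm
  have hm2 : m ^ 2 = p + q - p * q - q * p := by
    have h : m ^ 2 = p * p + q * q - p * q - q * p := by rw [hm]; noncomm_ring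
    rw [h, hpp, hqq]
  -- p commutes with m^2
  have hpm2 : Commute p (m ^ 2) := by
    unfold Commute SemiconjBy
    rw [hm2]
    simp only [mul_add, add_mul, mul_sub, sub_mul, ← mul_assoc, hpp, hqq, hpp', hqq']
    abel
  have hqm2 : Commute q (m ^ 2) := by
    unfold Commute SemiconjBy
    rw [hm2]
    simp only [mul_add, add_mul, mul_sub, sub_mul, ← mul_assoc, hpp, hqq, hpp', hqq']
    abel
  -- t = (m^2)^k commutes with p and q
  set t := (m ^ 2) ^ k with ht
  have hpt : Commute p t := hpm2.pow_right k
  have hqt : Commute q t := hqm2.pow_right k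
  -- w = inverse of u = 1 - m^2
  set w := (↑hu.unit⁻¹ : R) with hw
  have hpu : Commute p ((hu.unit : Rˣ) : R) := by
    rw [IsUnit.unit_spec]
    exact (Commute.one_right p).sub_right hpm2
  have hqu : Commute q ((hu.unit : Rˣ) : R) := by
    rw [IsUnit.unit_spec]
    exact (Commute.one_right q).sub_right hqm2
  have hpw : Commute p w := hpu.units_inv_right
  have hqw : Commute q w := hqu.units_inv_right
  -- s = t * w commutes with p and q
  set s := t * w with hs
  have hps : Commute p s := hpt.mul_right hpw
  have hqs : Commute q s := hqt.mul_right hqw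
  have hpqs : Commute (p * q) s := hps.mul_left hqs
  -- m^n = m * s would be wrong; m^n = m * t
  have hmn : m ^ n = m * t := by
    rw [hk, ht, ← pow_mul, ← pow_succ', add_comm]
  -- pv = pq
  have hpv : p * ((1 - p) * (1 - q) + p * q) = p * q := by
    simp only [mul_add, add_mul, mul_sub, sub_mul, ← mul_assoc, hpp, hqq, hpp', hqq',
      one_mul, mul_one]
    abel
  -- key identity: m * (1 - m^2) = p*q*p - q*p*q
  have hkey : m * (1 - m ^ 2) = p * q * p - q * p * q := by
    rw [hm2, hm]
    simp only [mul_add, add_mul, mul_sub, sub_mul, ← mul_assoc, hpp, hqq, hpp', hqq',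
      one_mul, mul_one]
    abel
  -- A = (1-2q)*m*(p*q)
  have hA : (1 - 2 * q) * m * (p * q) = p * q - q * p * q := by
    rw [hm]
    simp only [mul_add, add_mul, mul_sub, sub_mul, ← mul_assoc, hpp, hqq, hpp', hqq',
      one_mul, mul_one, two_mul]
    abel
  have hB : (p * q) * ((1 - 2 * q) * m) = p * q - p * q * p := by
    rw [hm]
    simp only [mul_add, add_mul, mul_sub, sub_mul, ← mul_assoc, hpp, hqq, hpp', hqq',
      one_mul, mul_one, two_mul]
    abel
  -- u commutes with t
  have hut : Commute (1 - m ^ 2) t :=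
    (Commute.one_left t).sub_left ((Commute.refl (m ^ 2)).pow_right k)
  have huw : (1 - m ^ 2) * w = 1 := by
    have h := hu.unit.mul_inv
    rwa [IsUnit.unit_spec] at h
  rw [hpv, hmn]
  calc m * t
      = (p * q * p - q * p * q) * s := by
        rw [← hkey, hs, ← mul_assoc, mul_assoc (m * (1 - m^2)) t w,
          mul_assoc m (1 - m^2) (t * w), ← mul_assoc (1 - m^2) t w, hut.eq,
          mul_assoc t (1 - m^2) w, huw, mul_one]
    _ = ((1 - 2 * q) * m * (p * q)) * s - ((p * q) * ((1 - 2 * q) * m)) * s := by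
        rw [hA, hB]; noncomm_ring
    _ = (1 - 2 * q) * (m * t) * w * (p * q) - p * q * ((1 - 2 * q) * (m * t) * w) := by
        rw [mul_assoc ((1-2*q)*m) (p*q) s, hpqs.eq, hs]
        noncomm_ring
end

section
/- Let K be a field, let F be a finite-dimensional vector space over K, let P, Q : F → F be linear idempotents (P² = P, Q² = Q), and let n be an odd positive integer. Then trace((P − Q)ⁿ) = trace(P) − trace(Q). -/
/-- For idempotent endomorphisms `P, Q` of a finite-dimensional vector space and odd
positive `n`, `trace((P - Q)ⁿ) = trace P - trace Q`. -/
theorem trace_pow_odd_sub_idempotent {K : Type*} [Field K] {F : Type*} [AddCommGroup F]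
    [Module K F] [FiniteDimensional K F] (P Q : Module.End K F)
    (hP : P ^ 2 = P) (hQ : Q ^ 2 = Q) (n : ℕ) (hodd : Odd n) (hpos : 0 < n) :
    LinearMap.trace K F ((P - Q) ^ n) = LinearMap.trace K F P - LinearMap.trace K F Q := by
  have hP' : P * P = P := by rw [← sq, hP]
  have hQ' : Q * Q = Q := by rw [← sq, hQ]
  have hP2 : ∀ x : Module.End K F, P * (P * x) = P * x := fun x => by rw [← mul_assoc, hP']
  have hQ2 : ∀ x : Module.End K F, Q * (Q * x) = Q * x := fun x => by rw [← mul_assoc, hQ']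
  set D := P - Q with hD
  set X := P * Q with hX
  set Y := Q * P with hY
  have hcX : Commute (D ^ 2) X := by
    show D ^ 2 * X = X * D ^ 2
    simp only [hD, hX, pow_two, mul_sub, sub_mul, mul_assoc, hP2, hQ2, hP', hQ']
    abel
  have hcY : Commute (D ^ 2) Y := by
    show D ^ 2 * Y = Y * D ^ 2
    simp only [hD, hY, pow_two, mul_sub, sub_mul, mul_assoc, hP2, hQ2, hP', hQ']
    abel
  have hcube : D ^ 3 = D - (X * Y - Y * X) := by
    simp only [hD, hX, hY, pow_succ, pow_zero, one_mul, mul_sub, sub_mul, mul_assoc,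
      hP2, hQ2, hP', hQ']
    abel
  -- main induction
  have main : ∀ k : ℕ, LinearMap.trace K F (D ^ (2 * k + 1)) = LinearMap.trace K F D := by
    intro k
    induction k with
    | zero => simp
    | succ k ih =>
      have hcXk : D ^ (2 * k) * X = X * D ^ (2 * k) := by
        have := (hcX.pow_left k); rw [← pow_mul] at this; exact this
      have hcYk : D ^ (2 * k) * Y = Y * D ^ (2 * k) := by
        have := (hcY.pow_left k); rw [← pow_mul] at this; exact this
      have hDk : D ^ (2 * (k + 1) + 1) = D ^ (2 * k + 1) - ((D ^ (2 * k) * X) * Y - Y * (D ^ (2 * k) * X)) := by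
        have h1 : D ^ (2 * (k + 1) + 1) = D ^ (2 * k) * D ^ 3 := by
          rw [show 2 * (k + 1) + 1 = 2 * k + 3 from by omega, pow_add]
        have h2 : D ^ (2 * k + 1) = D ^ (2 * k) * D := by rw [pow_succ]
        rw [h1, hcube, mul_sub (D ^ (2 * k)) D (X * Y - Y * X),
          mul_sub (D ^ (2 * k)) (X * Y) (Y * X), ← h2]
        congr 1
        rw [← mul_assoc (D ^ (2 * k)) X Y, ← mul_assoc (D ^ (2 * k)) Y X, hcYk,
          mul_assoc Y (D ^ (2 * k)) X]
      rw [hDk, map_sub, map_sub, LinearMap.trace_mul_comm, sub_self, sub_zero, ih]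
  obtain ⟨k, hk⟩ := hodd
  rw [hk] at *
  rw [main k, hD, map_sub]
end

section
/- Let K be a field of characteristic zero, let F be a finite-dimensional vector space over K, let P, Q : F → F be linear idempotents (P² = P, Q² = Q), and let n be an odd positive integer. Then trace((P − Q)ⁿ) = (rank P : K) − (rank Q : K); in particular trace((P − Q)ⁿ) is (the image in K of) an integer. -/
lemma trace_idem {K : Type*} [Field K] [CharZero K]
    {F : Type*} [AddCommGroup F] [Module K F] [FiniteDimensional K F]
    (P : Module.End K F) (hP : P ^ 2 = P) :
    LinearMap.trace K F P = (Module.finrank K (LinearMap.range P) : K) := by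
  have hproj : LinearMap.IsProj (LinearMap.range P) P := by
    refine ⟨fun x => ⟨x, rfl⟩, ?_⟩
    rintro x ⟨y, rfl⟩
    have := congrArg (fun f : Module.End K F => f y) hP
    simpa [pow_two, Module.End.mul_apply] using this
  exact hproj.trace

/-- Over a field of characteristic zero, for idempotent endomorphisms `P, Q` of a
finite-dimensional vector space and odd positive `n`,
`trace((P - Q)ⁿ) = rank P - rank Q` (ranks cast into `K`). -/
theorem trace_pow_odd_sub_idempotent_eq_rank_sub_rank {K : Type*} [Field K] [CharZero K]
    {F : Type*} [AddCommGroup F] [Module K F] [FiniteDimensional K F]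
    (P Q : Module.End K F) (hP : P ^ 2 = P) (hQ : Q ^ 2 = Q)
    (n : ℕ) (hodd : Odd n) (hpos : 0 < n) :
    LinearMap.trace K F ((P - Q) ^ n) =
      (Module.finrank K (LinearMap.range P) : K) - (Module.finrank K (LinearMap.range Q) : K) := by
  have hP' : P * P = P := by rw [← pow_two]; exact hP
  have hQ' : Q * Q = Q := by rw [← pow_two]; exact hQ
  set A : Module.End K F := P - Q with hA
  set B : Module.End K F := P + Q - 1 with hB
  have hsq : A ^ 2 = 1 - B ^ 2 := by
    simp only [hA, hB]
    noncomm_ring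
    simp only [hP', hQ']
    abel
  have hanti : A * B = -(B * A) := by
    simp only [hA, hB]
    noncomm_ring
    simp only [hP', hQ']
    abel
  -- odd powers of A anticommute with B
  have hanti' : ∀ k : ℕ, A ^ (2 * k + 1) * B = -(B * A ^ (2 * k + 1)) := by
    intro k
    induction k with
    | zero => simpa using hanti
    | succ m ih =>
      have hexp : 2 * (m + 1) + 1 = (2 * m + 1) + 2 := by ring
      rw [hexp, pow_add]
      have h2 : A ^ 2 * B = B * A ^ 2 := by
        calc A ^ 2 * B = A * (A * B) := by rw [pow_two, mul_assoc]
          _ = A * (-(B * A)) := by rw [hanti]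
          _ = -(A * B) * A := by noncomm_ring
          _ = (B * A) * A := by rw [hanti]; noncomm_ring
          _ = B * A ^ 2 := by rw [pow_two, mul_assoc]
      calc A ^ (2 * m + 1) * A ^ 2 * B = A ^ (2 * m + 1) * (A ^ 2 * B) := by rw [mul_assoc]
        _ = A ^ (2 * m + 1) * B * A ^ 2 := by rw [h2, mul_assoc]
        _ = -(B * A ^ (2 * m + 1)) * A ^ 2 := by rw [ih]
        _ = -(B * (A ^ (2 * m + 1) * A ^ 2)) := by noncomm_ring
  -- trace of odd power is constant
  have key : ∀ k : ℕ, LinearMap.trace K F (A ^ (2 * k + 1)) = LinearMap.trace K F A := by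
    intro k
    induction k with
    | zero => simp
    | succ m ih =>
      have hzero : LinearMap.trace K F (A ^ (2 * m + 1) * (B * B)) = 0 := by
        have e1 : A ^ (2 * m + 1) * (B * B) = (A ^ (2 * m + 1) * B) * B := by noncomm_ring
        have e2 : B * -(B * A ^ (2 * m + 1)) = -(A ^ (2 * m + 1) * (B * B) -
            (A ^ (2 * m + 1) * (B * B) - (B * B) * A ^ (2 * m + 1))) := by noncomm_ring
        have h1 : LinearMap.trace K F (A ^ (2 * m + 1) * (B * B)) =
            -(LinearMap.trace K F (A ^ (2 * m + 1) * (B * B))) := by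
          conv_lhs => rw [e1, LinearMap.trace_mul_comm, hanti']
          rw [e2]
          simp only [map_neg, map_sub]
          rw [LinearMap.trace_mul_comm K (B * B) (A ^ (2 * m + 1))]
          ring
        have h2 := CharZero.eq_neg_self_iff.mp h1
        exact h2
      have hexp : 2 * (m + 1) + 1 = (2 * m + 1) + 2 := by ring
      have hstep : A ^ (2 * (m + 1) + 1) = A ^ (2 * m + 1) - A ^ (2 * m + 1) * (B * B) := by
        rw [hexp, pow_add, hsq]
        noncomm_ring
      rw [hstep, map_sub, hzero, sub_zero, ih]
  obtain ⟨k, hk⟩ := hodd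
  have : LinearMap.trace K F ((P - Q) ^ n) = LinearMap.trace K F A := by
    rw [hk]; exact key k
  rw [this, hA, map_sub, trace_idem P hP, trace_idem Q hQ]
end

section
/- Let K be a field of characteristic zero, let F be a finite-dimensional vector space over K, let P, Q : F → F be linear idempotents (P² = P, Q² = Q), and let n be an odd positive integer. Then trace((P − Q)ⁿ) = (dim E₁₀ : K) − (dim Ẽ₀₁ : K), where E₁₀ = {x ∈ F : Px = x, Qx = 0} and Ẽ₀₁ = {f ∈ F* : P*f = 0, Q*f = f} (P*, Q* being the dual maps on F*). -/
open LinearMap Module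

section Aux

variable {K : Type*} [Field K] [CharZero K]
    {F : Type*} [AddCommGroup F] [Module K F] [FiniteDimensional K F]

/-- For idempotents, `trace ((P-Q)^(2k+1)) = trace (P-Q)`. -/
lemma aux_trace_pow_odd (P Q : Module.End K F) (hP : P ^ 2 = P) (hQ : Q ^ 2 = Q) (k : ℕ) :
    LinearMap.trace K F ((P - Q) ^ (2 * k + 1)) = LinearMap.trace K F (P - Q) := by
  have hP' : P * P = P := by rw [← pow_two]; exact hP
  have hQ' : Q * Q = Q := by rw [← pow_two]; exact hQ
  set D : Module.End K F := P - Q with hD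
  set A : Module.End K F := 1 - P - Q with hA
  have hDA : D * A = -(A * D) := by
    simp only [hD, hA, mul_sub, sub_mul, mul_one, one_mul, hP', hQ']
    abel
  have hsum : D * D = 1 - A * A := by
    simp only [hD, hA, mul_sub, sub_mul, mul_one, one_mul, hP', hQ']
    abel
  have key : ∀ m, D ^ m * A = (-1 : Module.End K F) ^ m * (A * D ^ m) := by
    intro m
    induction m with
    | zero => simp
    | succ m ih =>
      calc D ^ (m + 1) * A = D ^ m * (D * A) := by rw [pow_succ, mul_assoc]
        _ = -(D ^ m * A * D) := by rw [hDA, mul_neg, mul_assoc]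
        _ = -((-1 : Module.End K F) ^ m * (A * D ^ m) * D) := by rw [ih]
        _ = (-1 : Module.End K F) ^ (m + 1) * (A * D ^ (m + 1)) := by
            simp only [pow_succ, mul_assoc, mul_neg, neg_mul, mul_one, neg_neg]
  have keyodd : ∀ m, Odd m → D ^ m * A = -(A * D ^ m) := by
    intro m hm
    rw [key m, Odd.neg_one_pow hm, neg_one_mul]
  have htr0 : ∀ m, Odd m → LinearMap.trace K F (D ^ m * (A * A)) = 0 := by
    intro m hm
    set t := LinearMap.trace K F (D ^ m * (A * A)) with ht
    have h1 : t = -t := by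
      calc t = LinearMap.trace K F (D ^ m * A * A) := by rw [ht, mul_assoc]
        _ = LinearMap.trace K F (A * (D ^ m * A)) := by rw [LinearMap.trace_mul_comm]
        _ = LinearMap.trace K F (A * -(A * D ^ m)) := by rw [keyodd m hm]
        _ = -LinearMap.trace K F (A * A * D ^ m) := by rw [mul_neg, map_neg, mul_assoc]
        _ = -t := by rw [LinearMap.trace_mul_comm, ht]
    have h2 : (2 : K) * t = 0 := by linear_combination h1
    rcases mul_eq_zero.mp h2 with h | h
    · exact absurd h two_ne_zero
    · exact h
  induction k with
  | zero => simp
  | succ k ih =>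
    have hpow : D ^ (2 * (k + 1) + 1) = D ^ (2 * k + 1) - D ^ (2 * k + 1) * (A * A) := by
      have : D ^ (2 * (k + 1) + 1) = D ^ (2 * k + 1) * (D * D) := by
        rw [show 2 * (k + 1) + 1 = (2 * k + 1) + 1 + 1 from by ring, pow_succ, pow_succ, mul_assoc]
      rw [this, hsum, mul_sub, mul_one]
    rw [hpow, map_sub, htr0 (2 * k + 1) ⟨k, by ring⟩, sub_zero, ih]

end Aux

/-- Main theorem, first formula, finite-dimensional case: over a characteristic-zero field,
for idempotents `P, Q` and odd positive `n`,
`trace((P - Q)ⁿ) = dim E₁₀ - dim Ẽ₀₁` where `E₁₀ = {x | Px = x, Qx = 0}` and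
`Ẽ₀₁ = {f ∈ F* | P*f = 0, Q*f = f}`. -/
theorem trace_pow_odd_eq_dim_E10_sub_dim_dual_E01 {K : Type*} [Field K] [CharZero K]
    {F : Type*} [AddCommGroup F] [Module K F] [FiniteDimensional K F]
    (P Q : Module.End K F) (hP : P ^ 2 = P) (hQ : Q ^ 2 = Q)
    (n : ℕ) (hodd : Odd n) (hpos : 0 < n)
    (E10 : Submodule K F) (hE10 : (E10 : Set F) = {x : F | P x = x ∧ Q x = 0})
    (E01' : Submodule K (Module.Dual K F))
    (hE01' : (E01' : Set (Module.Dual K F)) =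
      {f : Module.Dual K F | P.dualMap f = 0 ∧ Q.dualMap f = f}) :
    LinearMap.trace K F ((P - Q) ^ n) =
      (Module.finrank K ↥E10 : K) - (Module.finrank K ↥E01' : K) := by
  have hP' : ∀ x, P (P x) = P x := by
    intro x
    have : (P * P) x = P x := by rw [← pow_two, hP]
    simpa [Module.End.mul_apply] using this
  have hQ' : ∀ x, Q (Q x) = Q x := by
    intro x
    have : (Q * Q) x = Q x := by rw [← pow_two, hQ]
    simpa [Module.End.mul_apply] using this
  -- trace reduction
  obtain ⟨k, hk⟩ := hodd
  have hn : n = 2 * k + 1 := by omega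
  rw [hn, aux_trace_pow_odd P Q hP hQ k]
  -- identify E10
  have hmem10 : ∀ x, x ∈ E10 ↔ P x = x ∧ Q x = 0 := by
    intro x
    rw [← SetLike.mem_coe, hE10]; rfl
  have hE10eq : E10 = LinearMap.range P ⊓ LinearMap.ker Q := by
    ext x
    rw [hmem10, Submodule.mem_inf, LinearMap.mem_range, LinearMap.mem_ker]
    constructor
    · rintro ⟨h1, h2⟩; exact ⟨⟨x, h1⟩, h2⟩
    · rintro ⟨⟨y, rfl⟩, h2⟩; exact ⟨hP' y, h2⟩
  -- identify E01'
  have hmem01 : ∀ f, f ∈ E01' ↔ P.dualMap f = 0 ∧ Q.dualMap f = f := by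
    intro f
    rw [← SetLike.mem_coe, hE01']; rfl
  have hE01eq : E01' = (LinearMap.range P ⊔ LinearMap.ker Q).dualAnnihilator := by
    ext f
    rw [hmem01, Submodule.dualAnnihilator_sup_eq, Submodule.mem_inf,
      Submodule.mem_dualAnnihilator, Submodule.mem_dualAnnihilator]
    constructor
    · rintro ⟨h1, h2⟩
      constructor
      · rintro w ⟨y, rfl⟩
        have := congrFun (congrArg DFunLike.coe h1) y
        simpa [LinearMap.dualMap_apply] using this
      · intro w hw
        rw [LinearMap.mem_ker] at hw
        have := congrFun (congrArg DFunLike.coe h2) w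
        simp only [LinearMap.dualMap_apply] at this
        rw [← this, hw, map_zero]
    · rintro ⟨h1, h2⟩
      constructor
      · ext y
        simpa using h1 (P y) ⟨y, rfl⟩
      · ext y
        have hmem : y - Q y ∈ LinearMap.ker Q := by
          simp [LinearMap.mem_ker, map_sub, hQ' y]
        have := h2 _ hmem
        simp only [map_sub] at this
        simp only [LinearMap.dualMap_apply]
        linear_combination -this
  -- trace of projections
  have hPproj : LinearMap.IsProj (LinearMap.range P) P := by
    constructor
    · intro x; exact LinearMap.mem_range_self P x
    · rintro x ⟨y, rfl⟩; exact hP' y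
  have hQproj : LinearMap.IsProj (LinearMap.range Q) Q := by
    constructor
    · intro x; exact LinearMap.mem_range_self Q x
    · rintro x ⟨y, rfl⟩; exact hQ' y
  rw [map_sub, hPproj.trace, hQproj.trace]
  -- numerology
  set W : Submodule K F := LinearMap.range P ⊔ LinearMap.ker Q with hW
  have h1 : finrank K ↥W + finrank K ↥(LinearMap.range P ⊓ LinearMap.ker Q) =
      finrank K ↥(LinearMap.range P) + finrank K ↥(LinearMap.ker Q) :=
    Submodule.finrank_sup_add_finrank_inf_eq _ _
  have h2 : finrank K ↥W.dualAnnihilator = finrank K (F ⧸ W) :=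
    (LinearEquiv.finrank_eq (Subspace.quotEquivAnnihilator W)).symm
  have h3 : finrank K (F ⧸ W) + finrank K ↥W = finrank K F :=
    Submodule.finrank_quotient_add_finrank W
  have h4 : finrank K ↥(LinearMap.range Q) + finrank K ↥(LinearMap.ker Q) = finrank K F :=
    LinearMap.finrank_range_add_finrank_ker Q
  rw [hE10eq, hE01eq, h2]
  have c1 : (finrank K ↥W : K) + (finrank K ↥(LinearMap.range P ⊓ LinearMap.ker Q) : K) =
      (finrank K ↥(LinearMap.range P) : K) + (finrank K ↥(LinearMap.ker Q) : K) := by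
    exact_mod_cast congrArg (Nat.cast : ℕ → K) h1
  have c3 : (finrank K (F ⧸ W) : K) + (finrank K ↥W : K) = (finrank K F : K) := by
    exact_mod_cast congrArg (Nat.cast : ℕ → K) h3
  have c4 : (finrank K ↥(LinearMap.range Q) : K) + (finrank K ↥(LinearMap.ker Q) : K) =
      (finrank K F : K) := by
    exact_mod_cast congrArg (Nat.cast : ℕ → K) h4
  linear_combination -c1 + c3 - c4
end

section
/- Let K be a field of characteristic zero, let F be a finite-dimensional vector space over K, let P, Q : F → F be linear idempotents (P² = P, Q² = Q), and let n be an odd positive integer. Then trace((P − Q)ⁿ) = (dim Ẽ₁₀ : K) − (dim E₀₁ : K), where E₀₁ = {x ∈ F : Px = 0, Qx = x} and Ẽ₁₀ = {f ∈ F* : P*f = f, Q*f = 0} (P*, Q* being the dual maps on F*). -/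
section Aux

variable {K : Type*} [Field K] [CharZero K]
    {F : Type*} [AddCommGroup F] [Module K F] [FiniteDimensional K F]

/-- Trace of odd powers of `A` is constant when `A` anticommutes with some `B`
with `A ^ 2 = 1 - B ^ 2`. -/
lemma trace_odd_pow_aux (A B : Module.End K F) (hanti : A * B = -(B * A))
    (hA2 : A ^ 2 = 1 - B ^ 2) (k : ℕ) :
    LinearMap.trace K F (A ^ (2 * k + 1)) = LinearMap.trace K F A := by
  have hcomm : A ^ 2 * B = B * A ^ 2 := by
    rw [pow_two, mul_assoc, hanti, mul_neg, ← mul_assoc, hanti, neg_mul, neg_neg, mul_assoc]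
  -- odd powers of A anticommute with B
  have hanti' : ∀ m : ℕ, A ^ (2 * m + 1) * B = -(B * A ^ (2 * m + 1)) := by
    intro m
    induction m with
    | zero => simpa using hanti
    | succ m ih =>
      have he : 2 * (m + 1) + 1 = 2 + (2 * m + 1) := by ring
      have h1 : A ^ (2 * (m + 1) + 1) = A ^ 2 * A ^ (2 * m + 1) := by
        rw [he, pow_add]
      rw [h1, mul_assoc, ih, mul_neg, ← mul_assoc, hcomm, mul_assoc, ← mul_neg]
  induction k with
  | zero => simp
  | succ k ih =>
    -- trace of A^{2k+1} * B^2 vanishes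
    have h4 : B * A ^ (2 * k + 1) = -(A ^ (2 * k + 1) * B) := by
      rw [hanti' k, neg_neg]
    have hzero : LinearMap.trace K F (A ^ (2 * k + 1) * B ^ 2) = 0 := by
      have h1 : LinearMap.trace K F (A ^ (2 * k + 1) * B * B)
          = LinearMap.trace K F (B * (A ^ (2 * k + 1) * B)) :=
        LinearMap.trace_mul_comm K (A ^ (2 * k + 1) * B) B
      have h2 : B * (A ^ (2 * k + 1) * B) = -(A ^ (2 * k + 1) * B * B) := by
        rw [← mul_assoc, h4, neg_mul]
      rw [h2, map_neg] at h1
      have h3 : LinearMap.trace K F (A ^ (2 * k + 1) * B * B) = 0 := by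
        linear_combination h1 / 2
      rw [pow_two, ← mul_assoc]; exact h3
    have hsplit : A ^ (2 * (k + 1) + 1) = A ^ (2 * k + 1) - A ^ (2 * k + 1) * B ^ 2 := by
      have he2 : 2 * (k + 1) + 1 = (2 * k + 1) + 2 := by ring
      have h5 : A ^ (2 * (k + 1) + 1) = A ^ (2 * k + 1) * A ^ 2 := by
        rw [he2, pow_add]
      rw [h5, hA2, mul_sub, mul_one]
    rw [hsplit, map_sub, hzero, sub_zero, ih]

end Aux

/-- Main theorem, second formula, finite-dimensional case: over a characteristic-zero field,
for idempotents `P, Q` and odd positive `n`,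
`trace((P - Q)ⁿ) = dim Ẽ₁₀ - dim E₀₁` where `E₀₁ = {x | Px = 0, Qx = x}` and
`Ẽ₁₀ = {f ∈ F* | P*f = f, Q*f = 0}`. -/
theorem trace_pow_odd_eq_dim_dual_E10_sub_dim_E01 {K : Type*} [Field K] [CharZero K]
    {F : Type*} [AddCommGroup F] [Module K F] [FiniteDimensional K F]
    (P Q : Module.End K F) (hP : P ^ 2 = P) (hQ : Q ^ 2 = Q)
    (n : ℕ) (hodd : Odd n) (hpos : 0 < n)
    (E01 : Submodule K F) (hE01 : (E01 : Set F) = {x : F | P x = 0 ∧ Q x = x})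
    (E10' : Submodule K (Module.Dual K F))
    (hE10' : (E10' : Set (Module.Dual K F)) =
      {f : Module.Dual K F | P.dualMap f = f ∧ Q.dualMap f = 0}) :
    LinearMap.trace K F ((P - Q) ^ n) =
      (Module.finrank K ↥E10' : K) - (Module.finrank K ↥E01 : K) := by
  have hPP : P * P = P := by rw [← pow_two]; exact hP
  have hQQ : Q * Q = Q := by rw [← pow_two]; exact hQ
  -- Step 1 : trace((P-Q)^n) = trace P - trace Q
  set A : Module.End K F := P - Q with hA
  set B : Module.End K F := P + Q - 1 with hB
  have hanti : A * B = -(B * A) := by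
    rw [hA, hB]
    have e1 : (P - Q) * (P + Q - 1) = P * Q - Q * P := by
      noncomm_ring [hPP, hQQ]
    have e2 : (P + Q - 1) * (P - Q) = Q * P - P * Q := by
      noncomm_ring [hPP, hQQ]
    rw [e1, e2]; abel
  have hA2 : A ^ 2 = 1 - B ^ 2 := by
    rw [hA, hB]
    have e1 : (P - Q) ^ 2 = P + Q - P * Q - Q * P := by
      noncomm_ring [hPP, hQQ]
    have e2 : (P + Q - 1) ^ 2 = P * Q + Q * P - P - Q + 1 := by
      noncomm_ring [hPP, hQQ]
    rw [e1, e2]; abel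
  obtain ⟨k, hk⟩ := hodd
  have htrace : LinearMap.trace K F (A ^ n) = LinearMap.trace K F A := by
    have hn : n = 2 * k + 1 := by omega
    rw [hn]; exact trace_odd_pow_aux A B hanti hA2 k
  -- trace of idempotents
  have hProjP : LinearMap.IsProj (LinearMap.range P) P := by
    refine ⟨fun x => LinearMap.mem_range_self P x, ?_⟩
    rintro x ⟨y, rfl⟩
    have := congrArg (fun T : Module.End K F => T y) hPP
    simpa [Module.End.mul_apply] using this
  have hProjQ : LinearMap.IsProj (LinearMap.range Q) Q := by
    refine ⟨fun x => LinearMap.mem_range_self Q x, ?_⟩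
    rintro x ⟨y, rfl⟩
    have := congrArg (fun T : Module.End K F => T y) hQQ
    simpa [Module.End.mul_apply] using this
  have htrP : LinearMap.trace K F P = (Module.finrank K (LinearMap.range P) : K) :=
    hProjP.trace
  have htrQ : LinearMap.trace K F Q = (Module.finrank K (LinearMap.range Q) : K) :=
    hProjQ.trace
  have htrA : LinearMap.trace K F A
      = (Module.finrank K (LinearMap.range P) : K)
        - (Module.finrank K (LinearMap.range Q) : K) := by
    rw [hA, map_sub, htrP, htrQ]
  -- Step 2 : identify E01 and E10'
  have hE01' : E01 = LinearMap.ker P ⊓ LinearMap.range Q := by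
    apply Submodule.ext
    intro x
    have hx : x ∈ (E01 : Set F) ↔ P x = 0 ∧ Q x = x := by rw [hE01]; rfl
    simp only [SetLike.mem_coe] at hx
    rw [hx, Submodule.mem_inf, LinearMap.mem_ker]
    constructor
    · rintro ⟨h1, h2⟩; exact ⟨h1, ⟨x, h2⟩⟩
    · rintro ⟨h1, ⟨y, rfl⟩⟩
      refine ⟨h1, ?_⟩
      have := congrArg (fun T : Module.End K F => T y) hQQ
      simpa [Module.End.mul_apply] using this
  have hE10'' : E10' = Submodule.dualAnnihilator (LinearMap.ker P ⊔ LinearMap.range Q) := by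
    apply Submodule.ext
    intro f
    have hf : f ∈ (E10' : Set (Module.Dual K F)) ↔ P.dualMap f = f ∧ Q.dualMap f = 0 := by
      rw [hE10']; rfl
    simp only [SetLike.mem_coe] at hf
    rw [hf, Submodule.dualAnnihilator_sup_eq, Submodule.mem_inf]
    constructor
    · rintro ⟨h1, h2⟩
      constructor
      · rw [Submodule.mem_dualAnnihilator]
        intro w hw
        have : (P.dualMap f) w = f w := by rw [h1]
        rw [LinearMap.dualMap_apply, LinearMap.mem_ker.mp hw, map_zero] at this
        exact this.symm
      · rw [Submodule.mem_dualAnnihilator]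
        rintro w ⟨y, rfl⟩
        have : (Q.dualMap f) y = 0 := by rw [h2]; rfl
        rwa [LinearMap.dualMap_apply] at this
    · rintro ⟨h1, h2⟩
      rw [Submodule.mem_dualAnnihilator] at h1 h2
      constructor
      · ext x
        rw [LinearMap.dualMap_apply]
        have hker : P x - x ∈ LinearMap.ker P := by
          rw [LinearMap.mem_ker, map_sub]
          have := congrArg (fun T : Module.End K F => T x) hPP
          simp only [Module.End.mul_apply] at this
          rw [this, sub_self]
        have := h1 _ hker
        rw [map_sub] at this
        exact sub_eq_zero.mp this
      · ext x
        rw [LinearMap.dualMap_apply]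
        exact h2 _ ⟨x, rfl⟩
  -- Step 3 : dimension count
  have hdim10 : Module.finrank K E10'
      + Module.finrank K (LinearMap.ker P ⊔ LinearMap.range Q : Submodule K F)
      = Module.finrank K F := by
    have e : Module.finrank K
        (F ⧸ (LinearMap.ker P ⊔ LinearMap.range Q : Submodule K F))
        = Module.finrank K
          (Submodule.dualAnnihilator (LinearMap.ker P ⊔ LinearMap.range Q)) :=
      LinearEquiv.finrank_eq
        (Subspace.quotEquivAnnihilator (LinearMap.ker P ⊔ LinearMap.range Q))
    rw [hE10'', ← e]
    exact Submodule.finrank_quotient_add_finrank _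
  have hsupinf := Submodule.finrank_sup_add_finrank_inf_eq
    (LinearMap.ker P) (LinearMap.range Q)
  have hrn := LinearMap.finrank_range_add_finrank_ker P
  have hnat : Module.finrank K E10' + Module.finrank K (LinearMap.range Q)
      = Module.finrank K (LinearMap.range P) + Module.finrank K E01 := by
    rw [hE01']
    omega
  -- Conclude
  rw [htrace, htrA]
  have hcast : (Module.finrank K E10' : K) + (Module.finrank K (LinearMap.range Q) : K)
      = (Module.finrank K (LinearMap.range P) : K) + (Module.finrank K E01 : K) := by
    exact_mod_cast congrArg (fun m : ℕ => (m : K)) hnat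
  linear_combination -hcast
end

section
/- Let H be a finite-dimensional complex inner product space, let P, Q : H → H be orthogonal projections (self-adjoint idempotents: P² = P = P*, Q² = Q = Q*), and let n be an odd positive integer. Then trace((P − Q)ⁿ) = (dim E₁₀ : ℂ) − (dim E₀₁ : ℂ), where E₁₀ = {x ∈ H : Px = x, Qx = 0} and E₀₁ = {x ∈ H : Px = 0, Qx = x}. -/
open LinearMap Module

section Aux

variable {H : Type*} [NormedAddCommGroup H] [InnerProductSpace ℂ H] [FiniteDimensional ℂ H]

lemma aux_ker_adjoint (f : H →ₗ[ℂ] H) :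
    LinearMap.ker (LinearMap.adjoint f) = (LinearMap.range f)ᗮ := by
  ext y
  constructor
  · intro hy
    rw [Submodule.mem_orthogonal]
    rintro u ⟨x, rfl⟩
    rw [← LinearMap.adjoint_inner_right]
    simp [LinearMap.mem_ker.mp hy]
  · intro hy
    rw [LinearMap.mem_ker, ← inner_self_eq_zero (𝕜 := ℂ)]
    rw [LinearMap.adjoint_inner_left]
    exact (Submodule.mem_orthogonal' _ _).mp hy _ ⟨_, rfl⟩

lemma aux_rank_adjoint (f : H →ₗ[ℂ] H) :
    finrank ℂ (LinearMap.range (LinearMap.adjoint f)) = finrank ℂ (LinearMap.range f) := by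
  have h1 := LinearMap.finrank_range_add_finrank_ker (LinearMap.adjoint f)
  have h2 := Submodule.finrank_add_finrank_orthogonal (K := LinearMap.range f)
  rw [aux_ker_adjoint] at h1
  have h3 : finrank ℂ (LinearMap.range f) ≤ finrank ℂ H :=
    Submodule.finrank_le _
  omega

lemma aux_split (P Q : Module.End ℂ H) :
    finrank ℂ ↥(LinearMap.range P) =
      finrank ℂ ↥(LinearMap.range P ⊓ LinearMap.ker Q) +
        finrank ℂ ↥(LinearMap.range (Q * P)) := by
  set p := LinearMap.range P
  have h1 := LinearMap.finrank_range_add_finrank_ker (Q.domRestrict p)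
  have hr : LinearMap.range (Q.domRestrict p) = LinearMap.range (Q * P) := by
    rw [LinearMap.range_domRestrict, Module.End.mul_eq_comp, LinearMap.range_comp]
  have hk : LinearMap.ker (Q.domRestrict p) =
      Submodule.comap p.subtype (p ⊓ LinearMap.ker Q) := by
    rw [LinearMap.ker_domRestrict, Submodule.comap_inf, Submodule.comap_subtype_self,
      top_inf_eq]
  have he : finrank ℂ ↥(LinearMap.ker (Q.domRestrict p)) =
      finrank ℂ ↥(p ⊓ LinearMap.ker Q) := by
    rw [hk]
    exact (Submodule.comapSubtypeEquivOfLe inf_le_left).finrank_eq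
  rw [hr, he] at h1
  omega

end Aux

/-- Avron–Seiler–Simon form, finite-dimensional case: for self-adjoint idempotents `P, Q`
on a finite-dimensional complex inner product space and odd positive `n`,
`trace((P - Q)ⁿ) = dim E₁₀ - dim E₀₁` where `E₁₀ = {x | Px = x, Qx = 0}` and
`E₀₁ = {x | Px = 0, Qx = x}`. -/
theorem trace_pow_odd_selfAdjoint_eq_dim_sub_dim {H : Type*} [NormedAddCommGroup H]
    [InnerProductSpace ℂ H] [FiniteDimensional ℂ H]
    (P Q : Module.End ℂ H) (hP : P ^ 2 = P) (hQ : Q ^ 2 = Q)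
    (hPsa : LinearMap.adjoint P = P) (hQsa : LinearMap.adjoint Q = Q)
    (n : ℕ) (hodd : Odd n) (hpos : 0 < n)
    (E10 : Submodule ℂ H) (hE10 : (E10 : Set H) = {x : H | P x = x ∧ Q x = 0})
    (E01 : Submodule ℂ H) (hE01 : (E01 : Set H) = {x : H | P x = 0 ∧ Q x = x}) :
    LinearMap.trace ℂ H ((P - Q) ^ n) =
      (Module.finrank ℂ ↥E10 : ℂ) - (Module.finrank ℂ ↥E01 : ℂ) := by
  set A : Module.End ℂ H := P - Q with hA
  set B : Module.End ℂ H := 1 - P - Q with hB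
  have hP2 : P * P = P := by rw [← pow_two]; exact hP
  have hQ2 : Q * Q = Q := by rw [← pow_two]; exact hQ
  -- anticommutation
  have hAB : A * B = -(B * A) := by
    rw [hA, hB]
    simp only [mul_sub, sub_mul, mul_one, one_mul, hP2, hQ2]
    noncomm_ring
  have hA2B : A ^ 2 * B = B * A ^ 2 := by
    rw [pow_two, mul_assoc, hAB, mul_neg, ← mul_assoc, hAB, neg_mul, neg_neg, mul_assoc]
  have hA2 : A ^ 2 = 1 - B ^ 2 := by
    rw [hA, hB]
    simp only [pow_two, mul_sub, sub_mul, mul_one, one_mul, hP2, hQ2]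
    noncomm_ring
  -- A^(2m+1) anticommutes with B
  have hAnB : ∀ m : ℕ, A ^ (2 * m + 1) * B = -(B * A ^ (2 * m + 1)) := by
    intro m
    induction m with
    | zero => simpa using hAB
    | succ m ih =>
        have : A ^ (2 * (m + 1) + 1) = A ^ 2 * A ^ (2 * m + 1) := by
          rw [show 2 * (m + 1) + 1 = 2 + (2 * m + 1) by ring, pow_add]
        rw [this, mul_assoc, ih, mul_neg, ← mul_assoc, hA2B, mul_assoc]
  -- trace of odd powers is constant
  have htr : ∀ m : ℕ, LinearMap.trace ℂ H (A ^ (2 * m + 1)) = LinearMap.trace ℂ H A := by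
    intro m
    induction m with
    | zero => norm_num
    | succ m ih =>
        have hzero : LinearMap.trace ℂ H (A ^ (2 * m + 1) * B * B) = 0 := by
          have e1 : LinearMap.trace ℂ H (A ^ (2 * m + 1) * B * B) =
              LinearMap.trace ℂ H (B * (A ^ (2 * m + 1) * B)) :=
            LinearMap.trace_mul_comm ℂ _ _
          have e2 : B * (A ^ (2 * m + 1) * B) = -(A ^ (2 * m + 1) * B * B) := by
            have hBA : B * A ^ (2 * m + 1) = -(A ^ (2 * m + 1) * B) := by
              rw [hAnB m, neg_neg]
            rw [← mul_assoc, hBA, neg_mul]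
          rw [e2, map_neg] at e1
          have h2 : (2 : ℂ) * LinearMap.trace ℂ H (A ^ (2 * m + 1) * B * B) = 0 := by
            linear_combination e1
          have := mul_eq_zero.mp h2
          simpa using this
        have hsplit : A ^ (2 * (m + 1) + 1) = A ^ (2 * m + 1) - A ^ (2 * m + 1) * B * B := by
          have : A ^ (2 * (m + 1) + 1) = A ^ (2 * m + 1) * A ^ 2 := by
            rw [show 2 * (m + 1) + 1 = (2 * m + 1) + 2 by ring, pow_add]
          rw [this, hA2, pow_two]
          noncomm_ring
        rw [hsplit, map_sub, hzero, sub_zero, ih]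
  -- reduce to trace A
  obtain ⟨m, hm⟩ := hodd
  have htrA : LinearMap.trace ℂ H ((P - Q) ^ n) = LinearMap.trace ℂ H A := by
    rw [hm] at *
    have : 2 * m + 1 = m + m + 1 := by ring
    rw [← hA, ← this] at *
    exact htr m
  rw [htrA, hA, map_sub]
  -- traces of projections are ranks
  have hPproj : LinearMap.IsProj (LinearMap.range P) P := by
    refine ⟨fun x => LinearMap.mem_range_self _ _, ?_⟩
    rintro x ⟨y, rfl⟩
    conv_rhs => rw [← hP2]
    rfl
  have hQproj : LinearMap.IsProj (LinearMap.range Q) Q := by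
    refine ⟨fun x => LinearMap.mem_range_self _ _, ?_⟩
    rintro x ⟨y, rfl⟩
    conv_rhs => rw [← hQ2]
    rfl
  rw [hPproj.trace, hQproj.trace]
  -- identify E10 and E01
  have hE10' : E10 = LinearMap.range P ⊓ LinearMap.ker Q := by
    apply Submodule.ext
    intro x
    rw [← SetLike.mem_coe, hE10, Set.mem_setOf_eq]
    constructor
    · rintro ⟨h1, h2⟩; exact ⟨⟨x, h1⟩, h2⟩
    · rintro ⟨⟨y, rfl⟩, h2⟩
      refine ⟨?_, h2⟩
      conv_rhs => rw [← hP2]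
      rfl
  have hE01' : E01 = LinearMap.range Q ⊓ LinearMap.ker P := by
    apply Submodule.ext
    intro x
    rw [← SetLike.mem_coe, hE01, Set.mem_setOf_eq]
    constructor
    · rintro ⟨h1, h2⟩; exact ⟨⟨x, h2⟩, h1⟩
    · rintro ⟨⟨y, rfl⟩, h2⟩
      refine ⟨h2, ?_⟩
      conv_rhs => rw [← hQ2]
      rfl
  -- rank identities
  have hsplitP := aux_split P Q
  have hsplitQ := aux_split Q P
  have hadj : LinearMap.adjoint (Q * P) = P * Q := by
    rw [Module.End.mul_eq_comp, LinearMap.adjoint_comp, hPsa, hQsa, Module.End.mul_eq_comp]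
  have hrk : finrank ℂ ↥(LinearMap.range (P * Q)) = finrank ℂ ↥(LinearMap.range (Q * P)) := by
    rw [← hadj]
    exact aux_rank_adjoint _
  rw [hE10', hE01']
  have : finrank ℂ ↥(LinearMap.range P) + finrank ℂ ↥(LinearMap.range Q ⊓ LinearMap.ker P) =
      finrank ℂ ↥(LinearMap.range Q) + finrank ℂ ↥(LinearMap.range P ⊓ LinearMap.ker Q) := by
    omega
  have h2 : (finrank ℂ ↥(LinearMap.range P) : ℂ) +
      (finrank ℂ ↥(LinearMap.range Q ⊓ LinearMap.ker P) : ℂ) =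
      (finrank ℂ ↥(LinearMap.range Q) : ℂ) +
      (finrank ℂ ↥(LinearMap.range P ⊓ LinearMap.ker Q) : ℂ) := by
    exact_mod_cast congrArg (Nat.cast : ℕ → ℂ) this
  linear_combination h2
end

section
/- Let K be a field, let F be a finite-dimensional vector space over K, let P, Q : F → F be linear idempotents (P² = P, Q² = Q), and let n be an odd positive integer. If the endomorphism I − (P − Q)² is invertible, then trace((P − Q)ⁿ) = 0. -/
/-- For idempotent endomorphisms `P, Q` of a finite-dimensional vector space and odd
positive `n`, if `1 - (P - Q)²` is invertible then `trace((P - Q)ⁿ) = 0`. -/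
theorem trace_pow_odd_eq_zero_of_isUnit {K : Type*} [Field K] {F : Type*}
    [AddCommGroup F] [Module K F] [FiniteDimensional K F]
    (P Q : Module.End K F) (hP : P ^ 2 = P) (hQ : Q ^ 2 = Q)
    (n : ℕ) (hodd : Odd n) (hpos : 0 < n)
    (hu : IsUnit (1 - (P - Q) ^ 2)) :
    LinearMap.trace K F ((P - Q) ^ n) = 0 := by
  have hP' : P * P = P := by rw [← pow_two]; exact hP
  have hQ' : Q * Q = Q := by rw [← pow_two]; exact hQ
  set D : Module.End K F := P - Q with hD
  set S : Module.End K F := P + Q - 1 with hS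
  -- basic multiplication identities
  have hSS : S * S = 1 - D ^ 2 := by
    simp only [hS, hD, pow_two, sub_mul, mul_sub, add_mul, mul_add, mul_one, one_mul, hP', hQ']
    abel
  have hDS : D * S = P * Q - Q * P := by
    simp only [hS, hD, sub_mul, mul_sub, add_mul, mul_add, mul_one, one_mul, hP', hQ']
    abel
  have hSD : S * D = -(D * S) := by
    simp only [hS, hD, sub_mul, mul_sub, add_mul, mul_add, mul_one, one_mul, hP', hQ']
    abel
  have hSP : S * P = Q * S := by
    simp only [hS, sub_mul, mul_sub, add_mul, mul_add, mul_one, one_mul, hP', hQ']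
    abel
  have hPDD : P * (D * D) = (D * D) * P := by
    simp only [hD, sub_mul, mul_sub, hP', hQ', mul_assoc]
    simp only [sub_mul, mul_sub, hP', hQ', ← mul_assoc, sub_mul, mul_sub, hP', hQ']
    abel
  have hQDD : Q * (D * D) = (D * D) * Q := by
    simp only [hD, sub_mul, mul_sub, hP', hQ', mul_assoc]
    simp only [sub_mul, mul_sub, hP', hQ', ← mul_assoc, sub_mul, mul_sub, hP', hQ']
    abel
  -- S is a unit
  have huS : IsUnit S := by
    rw [← isUnit_pow_iff (two_ne_zero), pow_two, hSS]; exact hu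
  obtain ⟨u, hu'⟩ := huS
  obtain ⟨k, hk⟩ := hodd
  set E : Module.End K F := (D * D) ^ k with hE
  have hPEc : Commute P E := Commute.pow_right hPDD k
  have hQEc : Commute Q E := Commute.pow_right hQDD k
  have hSE : S * E = E * S := by
    have : Commute S E := by
      have : Commute (P + Q - 1) E := ((hPEc.add_left hQEc).sub_left (Commute.one_left E))
      simpa [hS] using this
    exact this
  have hDn : D ^ n = E * D := by
    rw [hk, pow_add, pow_mul, pow_one, pow_two, hE]
  -- trace of E*D*S is zero
  have t3 : LinearMap.trace K F (E * D * S) = 0 := by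
    have h1 : E * D * S = E * P * Q - E * (Q * P) := by
      rw [mul_assoc, hDS, mul_sub, mul_assoc]
    rw [h1, map_sub]
    have h2 : LinearMap.trace K F (E * (Q * P)) = LinearMap.trace K F (E * P * Q) := by
      calc LinearMap.trace K F (E * (Q * P)) = LinearMap.trace K F ((E * Q) * P) := by
            rw [mul_assoc]
        _ = LinearMap.trace K F (P * (E * Q)) := LinearMap.trace_mul_comm K (E * Q) P
        _ = LinearMap.trace K F (E * P * Q) := by rw [← mul_assoc, hPEc.eq]
    rw [h2, sub_self]
  -- trace(E*D*P) = - trace(E*D*Q)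
  have t12 : LinearMap.trace K F (E * D * P) = - LinearMap.trace K F (E * D * Q) := by
    have key : E * D * P = -(↑u⁻¹ * (E * D * Q * ↑u)) := by
      have h1 : (↑u : Module.End K F) * (E * D * P) = -(E * D * Q * ↑u) := by
        rw [hu']
        calc S * (E * D * P) = E * (S * D) * P := by
              rw [show S * (E * D * P) = (S * E) * (D * P) from by noncomm_ring, hSE]
              noncomm_ring
          _ = -(E * (D * (S * P))) := by rw [hSD]; noncomm_ring
          _ = -(E * D * Q * S) := by rw [hSP]; noncomm_ring
      calc E * D * P = ↑u⁻¹ * (↑u * (E * D * P)) := by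
            rw [← mul_assoc, u.inv_mul, one_mul]
        _ = -(↑u⁻¹ * (E * D * Q * ↑u)) := by rw [h1, mul_neg]
    rw [key, map_neg, neg_inj]
    calc LinearMap.trace K F (↑u⁻¹ * (E * D * Q * ↑u))
        = LinearMap.trace K F ((E * D * Q * ↑u) * ↑u⁻¹) :=
          LinearMap.trace_mul_comm K _ _
      _ = LinearMap.trace K F (E * D * Q) := by rw [mul_assoc, u.mul_inv, mul_one]
  -- combine
  have hone : P + Q - S = 1 := by rw [hS]; abel
  have : D ^ n = E * D * P + E * D * Q - E * D * S := by
    rw [hDn, show E * D * P + E * D * Q - E * D * S = E * D * (P + Q - S) from by noncomm_ring,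
      hone, mul_one]
  rw [this, map_sub, map_add, t12, t3, sub_zero, neg_add_cancel]
end
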